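/- (D2, basic approximation) Let x > 0, y > 0, set a = (x+y)/2 and g = √(xy), and suppose 0 < z < min{x,y}. Then there exists θ with 1 − (4/π)√(z/g) < θ < a/g such that R_D(x,y,z) = (3/√(xyz))·( 1 − (πθ/2)·√(z/g) ). -/

import Mathlib

open MeasureTheory Real


noncomputable def RD (x y z : ℝ) : ℝ :=
  (3/2) * ∫ t in Set.Ioi (0:ℝ), ((t+x)*(t+y)) ^ (-(1/2) : ℝ) * (t+z) ^ (-(3/2) : ℝ)

open Set Filter Topology

namespace RDaux

lemma tendsto_sqrt_atTop' : Tendsto Real.sqrt atTop atTop := by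
  have h : Real.sqrt = fun x : ℝ => x ^ (1/2 : ℝ) := funext fun x => Real.sqrt_eq_rpow x
  rw [h]; exact tendsto_rpow_atTop one_half_pos

lemma sqrt_add_tendsto (c : ℝ) : Tendsto (fun t : ℝ => Real.sqrt (t + c)) atTop atTop :=
  tendsto_sqrt_atTop'.comp (tendsto_atTop_add_const_right _ c tendsto_id)

lemma hasDerivAt_sqrt_add {c t : ℝ} (h : 0 < t + c) :
    HasDerivAt (fun s : ℝ => Real.sqrt (s + c)) (1 / (2 * Real.sqrt (t + c))) t := by
  exact ((Real.hasDerivAt_sqrt h.ne').comp t ((hasDerivAt_id t).add_const c)).congr_deriv (mul_one _)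

lemma int_f1 {c : ℝ} (hc : 0 < c) :
    IntegrableOn (fun t => ((t+c) * Real.sqrt (t+c))⁻¹) (Ioi (0:ℝ)) ∧
    ∫ t in Ioi (0:ℝ), ((t+c) * Real.sqrt (t+c))⁻¹ = 2 / Real.sqrt c := by
  have hderiv : ∀ t ∈ Ioi (0:ℝ), HasDerivAt (fun s => -2 * (Real.sqrt (s + c))⁻¹)
      (((t+c) * Real.sqrt (t+c))⁻¹) t := by
    intro t ht
    have h0 : 0 < t + c := by have := ht.out; linarith
    have hs : Real.sqrt (t+c) ≠ 0 := by positivity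
    have h2 := ((hasDerivAt_sqrt_add h0).inv hs).const_mul (-2 : ℝ)
    refine h2.congr_deriv ?_
    symm
    have hsq : Real.sqrt (t+c) * Real.sqrt (t+c) = t + c := Real.mul_self_sqrt h0.le
    field_simp
    nlinarith [Real.sqrt_nonneg (t+c)]
  have hcont : ContinuousWithinAt (fun s => -2 * (Real.sqrt (s + c))⁻¹) (Ici 0) 0 := by
    have : ContinuousAt (fun s : ℝ => -2 * (Real.sqrt (s + c))⁻¹) 0 := by
      have h1 : ContinuousAt (fun s : ℝ => Real.sqrt (s + c)) 0 :=
        (Real.continuous_sqrt.comp (continuous_id.add continuous_const)).continuousAt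
      have h2 : Real.sqrt (0 + c) ≠ 0 := by
        rw [zero_add]; exact (Real.sqrt_pos.2 hc).ne'
      exact (h1.inv₀ h2).const_mul _
    exact this.continuousWithinAt
  have hpos : ∀ t ∈ Ioi (0:ℝ), 0 ≤ ((t+c) * Real.sqrt (t+c))⁻¹ := by
    intro t ht
    have h0 : (0:ℝ) < t + c := by have := ht.out; linarith
    exact inv_nonneg.2 (mul_nonneg h0.le (Real.sqrt_nonneg _))
  have htend : Tendsto (fun s => -2 * (Real.sqrt (s + c))⁻¹) atTop (𝓝 0) := by
    have h1 : Tendsto (fun s : ℝ => (Real.sqrt (s + c))⁻¹) atTop (𝓝 0) :=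
      (sqrt_add_tendsto c).inv_tendsto_atTop
    simpa using h1.const_mul (-2 : ℝ)
  refine ⟨integrableOn_Ioi_deriv_of_nonneg hcont hderiv hpos htend, ?_⟩
  rw [integral_Ioi_of_hasDerivAt_of_nonneg hcont hderiv hpos htend]
  rw [zero_add]
  have : Real.sqrt c ≠ 0 := by positivity
  field_simp
  ring

lemma int_f2 {c : ℝ} (hc : 0 < c) :
    IntegrableOn (fun t => (Real.sqrt t * (t+c))⁻¹) (Ioi (0:ℝ)) ∧
    ∫ t in Ioi (0:ℝ), (Real.sqrt t * (t+c))⁻¹ = π / Real.sqrt c := by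
  have hsc : (0:ℝ) < Real.sqrt c := Real.sqrt_pos.2 hc
  have hderiv : ∀ t ∈ Ioi (0:ℝ), HasDerivAt
      (fun s => (2 / Real.sqrt c) * Real.arctan (Real.sqrt s / Real.sqrt c))
      ((Real.sqrt t * (t+c))⁻¹) t := by
    intro t ht
    have ht0 : (0:ℝ) < t := ht.out
    have hst : (0:ℝ) < Real.sqrt t := Real.sqrt_pos.2 ht0
    have h1 : HasDerivAt (fun s : ℝ => Real.sqrt s) (1 / (2 * Real.sqrt t)) t :=
      Real.hasDerivAt_sqrt ht0.ne'
    have h2 : HasDerivAt (fun s : ℝ => Real.sqrt s / Real.sqrt c)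
        (1 / (2 * Real.sqrt t) / Real.sqrt c) t := h1.div_const _
    have h3 := ((Real.hasDerivAt_arctan (Real.sqrt t / Real.sqrt c)).comp t h2).const_mul
      (2 / Real.sqrt c)
    refine h3.congr_deriv ?_
    symm
    have h4 : Real.sqrt t * Real.sqrt t = t := Real.mul_self_sqrt ht0.le
    have h5 : Real.sqrt c * Real.sqrt c = c := Real.mul_self_sqrt hc.le
    field_simp
    linear_combination h5 + h4
  have hcont : ContinuousWithinAt
      (fun s => (2 / Real.sqrt c) * Real.arctan (Real.sqrt s / Real.sqrt c)) (Ici 0) 0 := by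
    exact (continuous_const.mul (Real.continuous_arctan.comp
      ((Real.continuous_sqrt).div_const _))).continuousWithinAt
  have hpos : ∀ t ∈ Ioi (0:ℝ), 0 ≤ (Real.sqrt t * (t+c))⁻¹ := by
    intro t ht
    have := ht.out
    positivity
  have htend : Tendsto (fun s => (2 / Real.sqrt c) * Real.arctan (Real.sqrt s / Real.sqrt c))
      atTop (𝓝 (π / Real.sqrt c)) := by
    have hin : Tendsto (fun s : ℝ => Real.sqrt s / Real.sqrt c) atTop atTop :=
      tendsto_sqrt_atTop'.atTop_div_const hsc
    have h1 : Tendsto (fun s : ℝ => Real.arctan (Real.sqrt s / Real.sqrt c)) atTop (𝓝 (π/2)) :=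
      (tendsto_nhds_of_tendsto_nhdsWithin Real.tendsto_arctan_atTop).comp hin
    have := h1.const_mul (2 / Real.sqrt c)
    convert this using 2
    field_simp
  refine ⟨integrableOn_Ioi_deriv_of_nonneg hcont hderiv hpos htend, ?_⟩
  rw [integral_Ioi_of_hasDerivAt_of_nonneg hcont hderiv hpos htend]
  simp [Real.sqrt_zero, Real.arctan_zero]

lemma int_f3 {c : ℝ} (hc : 0 < c) :
    IntegrableOn (fun t => (Real.sqrt t)⁻¹ - t * ((t+c) * Real.sqrt (t+c))⁻¹) (Ioi (0:ℝ)) ∧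
    ∫ t in Ioi (0:ℝ), ((Real.sqrt t)⁻¹ - t * ((t+c) * Real.sqrt (t+c))⁻¹)
      = 4 * Real.sqrt c := by
  have hsc : (0:ℝ) < Real.sqrt c := Real.sqrt_pos.2 hc
  have hderiv : ∀ t ∈ Ioi (0:ℝ), HasDerivAt
      (fun s => 2 * Real.sqrt s - 2 * Real.sqrt (s + c) - 2 * c * (Real.sqrt (s + c))⁻¹)
      ((Real.sqrt t)⁻¹ - t * ((t+c) * Real.sqrt (t+c))⁻¹) t := by
    intro t ht
    have ht0 : (0:ℝ) < t := ht.out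
    have h0 : 0 < t + c := by linarith
    have hst : (0:ℝ) < Real.sqrt t := Real.sqrt_pos.2 ht0
    have hsu : (0:ℝ) < Real.sqrt (t+c) := Real.sqrt_pos.2 h0
    have h1 := (Real.hasDerivAt_sqrt ht0.ne').const_mul (2:ℝ)
    have h2 := (hasDerivAt_sqrt_add h0).const_mul (2:ℝ)
    have h3 := ((hasDerivAt_sqrt_add h0).inv hsu.ne').const_mul (2*c)
    have h4 := (h1.sub h2).sub h3
    refine h4.congr_deriv ?_
    symm
    have hq : Real.sqrt t * Real.sqrt t = t := Real.mul_self_sqrt ht0.le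
    have hq2 : Real.sqrt (t+c) * Real.sqrt (t+c) = t + c := Real.mul_self_sqrt h0.le
    field_simp
    linear_combination ((t+c)*Real.sqrt (t+c) - Real.sqrt t * t - (t+c)*(Real.sqrt (t+c) - Real.sqrt t)) * hq2
  have hcont : ContinuousWithinAt
      (fun s => 2 * Real.sqrt s - 2 * Real.sqrt (s + c) - 2 * c * (Real.sqrt (s + c))⁻¹)
      (Ici 0) 0 := by
    have hc1 : Continuous fun s : ℝ => Real.sqrt (s + c) :=
      Real.continuous_sqrt.comp (continuous_id.add continuous_const)
    have h2 : Real.sqrt (0 + c) ≠ 0 := by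
      rw [zero_add]; exact (Real.sqrt_pos.2 hc).ne'
    have : ContinuousAt
        (fun s : ℝ => 2 * Real.sqrt s - 2 * Real.sqrt (s + c)
          - 2 * c * (Real.sqrt (s + c))⁻¹) 0 := by
      exact ((continuous_const.mul Real.continuous_sqrt).continuousAt.sub
        (continuous_const.mul hc1).continuousAt).sub
        (continuousAt_const.mul (hc1.continuousAt.inv₀ h2))
    exact this.continuousWithinAt
  have hpos : ∀ t ∈ Ioi (0:ℝ),
      0 ≤ (Real.sqrt t)⁻¹ - t * ((t+c) * Real.sqrt (t+c))⁻¹ := by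
    intro t ht
    have ht0 : (0:ℝ) < t := ht.out
    have hst : (0:ℝ) < Real.sqrt t := Real.sqrt_pos.2 ht0
    have hM : (0:ℝ) < (t+c) * Real.sqrt (t+c) := by positivity
    have hle : t * Real.sqrt t ≤ (t+c) * Real.sqrt (t+c) :=
      mul_le_mul (by linarith) (Real.sqrt_le_sqrt (by linarith)) hst.le (by linarith)
    rw [sub_nonneg, ← div_eq_mul_inv, ← one_div, div_le_div_iff₀ hM hst]
    nlinarith
  have htend : Tendsto
      (fun s => 2 * Real.sqrt s - 2 * Real.sqrt (s + c) - 2 * c * (Real.sqrt (s + c))⁻¹)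
      atTop (𝓝 0) := by
    have heq : ∀ᶠ s in atTop, (-(2*c) * (Real.sqrt s + Real.sqrt (s+c))⁻¹
        - 2 * c * (Real.sqrt (s + c))⁻¹)
        = 2 * Real.sqrt s - 2 * Real.sqrt (s + c) - 2 * c * (Real.sqrt (s + c))⁻¹ := by
      filter_upwards [eventually_ge_atTop (0:ℝ)] with s hs
      have h0 : 0 < s + c := by linarith
      have hsu : (0:ℝ) < Real.sqrt (s+c) := Real.sqrt_pos.2 h0
      have hsum : (0:ℝ) < Real.sqrt s + Real.sqrt (s+c) := by positivity
      have hq : Real.sqrt s * Real.sqrt s = s := Real.mul_self_sqrt hs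
      have hq2 : Real.sqrt (s+c) * Real.sqrt (s+c) = s + c := Real.mul_self_sqrt h0.le
      have key : 2 * Real.sqrt s - 2 * Real.sqrt (s+c)
          = -(2*c) * (Real.sqrt s + Real.sqrt (s+c))⁻¹ := by
        field_simp
        linear_combination hq - hq2
      linarith [key]
    have h1 : Tendsto (fun s : ℝ => -(2*c) * (Real.sqrt s + Real.sqrt (s+c))⁻¹)
        atTop (𝓝 0) := by
      have : Tendsto (fun s : ℝ => Real.sqrt s + Real.sqrt (s+c)) atTop atTop :=
        tendsto_atTop_mono (fun s => le_add_of_nonneg_right (Real.sqrt_nonneg _))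
          tendsto_sqrt_atTop'
      simpa using this.inv_tendsto_atTop.const_mul (-(2*c))
    have h2 : Tendsto (fun s : ℝ => 2 * c * (Real.sqrt (s+c))⁻¹) atTop (𝓝 0) := by
      simpa using (sqrt_add_tendsto c).inv_tendsto_atTop.const_mul (2*c)
    have h3 := h1.sub h2
    rw [sub_zero] at h3
    exact Filter.Tendsto.congr' heq h3
  refine ⟨integrableOn_Ioi_deriv_of_nonneg hcont hderiv hpos htend, ?_⟩
  rw [integral_Ioi_of_hasDerivAt_of_nonneg hcont hderiv hpos htend]
  rw [Real.sqrt_zero, zero_add]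
  have h5 : Real.sqrt c * Real.sqrt c = c := Real.mul_self_sqrt hc.le
  have hne : Real.sqrt c ≠ 0 := hsc.ne'
  field_simp
  linear_combination (-2 : ℝ) * Real.sq_sqrt hc.le

lemma integral_strict_lt {F G : ℝ → ℝ} (hF : IntegrableOn F (Ioi (0:ℝ)))
    (hG : IntegrableOn G (Ioi (0:ℝ))) (h : ∀ t ∈ Ioi (0:ℝ), F t < G t) :
    (∫ t in Ioi (0:ℝ), F t) < ∫ t in Ioi (0:ℝ), G t := by
  have hsub : IntegrableOn (fun t => G t - F t) (Ioi (0:ℝ)) := hG.sub hF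
  have hpos : 0 < ∫ t in Ioi (0:ℝ), (G t - F t) := by
    rw [setIntegral_pos_iff_support_of_nonneg_ae ?_ hsub]
    · refine lt_of_lt_of_le ?_ (measure_mono
        (?_ : Ioi (0:ℝ) ⊆ Function.support (fun t => G t - F t) ∩ Ioi 0))
      · rw [Real.volume_Ioi]; exact ENNReal.zero_lt_top
      · intro t ht
        exact ⟨(sub_pos.2 (h t ht)).ne', ht⟩
    · filter_upwards [ae_restrict_mem measurableSet_Ioi] with t ht
      exact sub_nonneg.2 (h t ht).le
  have := MeasureTheory.integral_sub hG hF
  rw [this] at hpos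
  linarith

end RDaux

set_option maxHeartbeats 2000000 in
/-- (D2), basic approximation of `R_D(x,y,z)` for `z ≪ x, y`. -/
theorem RD_asymp_z_lt_xy (x y z : ℝ) (hx : 0 < x) (hy : 0 < y)
    (hz : 0 < z) (hzxy : z < min x y) :
    ∃ θ : ℝ,
      1 - (4 / π) * Real.sqrt (z / Real.sqrt (x * y)) < θ ∧
      θ < ((x + y) / 2) / Real.sqrt (x * y) ∧
      RD x y z = (3 / Real.sqrt (x * y * z)) *
        (1 - (π * θ / 2) * Real.sqrt (z / Real.sqrt (x * y))) := by
  have hxy : (0:ℝ) < x * y := mul_pos hx hy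
  set g := Real.sqrt (x * y) with hgdef
  set a := (x + y) / 2 with hadef
  have hgpos : 0 < g := Real.sqrt_pos.2 hxy
  have hg2 : g ^ 2 = x * y := Real.sq_sqrt hxy.le
  have h2a : x + y = 2 * a := by rw [hadef]; ring
  have hga : g ≤ a := by
    nlinarith [sq_nonneg (Real.sqrt x - Real.sqrt y), Real.sq_sqrt hx.le, Real.sq_sqrt hy.le,
      Real.sqrt_mul hx.le y, Real.sqrt_nonneg x, Real.sqrt_nonneg y]
  have hzg : z < g := by
    refine lt_of_lt_of_le hzxy ?_
    rcases le_total x y with h | h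
    · rw [min_eq_left h, hgdef]
      exact (Real.le_sqrt hx.le hxy.le).2 (by nlinarith)
    · rw [min_eq_right h, hgdef]
      exact (Real.le_sqrt hy.le hxy.le).2 (by nlinarith)
  obtain ⟨hint1, hval1⟩ := RDaux.int_f1 hz
  obtain ⟨hint2, hval2⟩ := RDaux.int_f2 hgpos
  obtain ⟨hint3, hval3⟩ := RDaux.int_f3 hz
  set φ : ℝ → ℝ := fun t => ((t+x)*(t+y)) ^ (-(1/2) : ℝ) * (t+z) ^ (-(3/2) : ℝ) with hφdef
  have hRD : RD x y z = 3/2 * ∫ t in Ioi (0:ℝ), φ t := rfl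
  set ψ : ℝ → ℝ := fun t => ((t+g) * ((t+z) * Real.sqrt (t+z)))⁻¹ with hψdef
  -- pointwise form of φ
  have hφeq : ∀ t ∈ Ioi (0:ℝ), φ t
      = (Real.sqrt ((t+x)*(t+y)))⁻¹ * ((t+z) * Real.sqrt (t+z))⁻¹ := by
    intro t ht
    have ht0 : (0:ℝ) < t := ht
    have hP : (0:ℝ) < (t+x)*(t+y) := by nlinarith
    have hz0 : (0:ℝ) < t + z := by linarith
    rw [hφdef]
    simp only
    rw [Real.rpow_neg hP.le, Real.rpow_neg hz0.le]
    congr 1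
    · rw [Real.sqrt_eq_rpow]
    · congr 1
      rw [show (3/2 : ℝ) = 1 + 1/2 by norm_num, Real.rpow_add hz0, Real.rpow_one,
        ← Real.sqrt_eq_rpow]
  have hψnonneg : ∀ t ∈ Ioi (0:ℝ), 0 ≤ ψ t := by
    intro t ht
    have ht0 : (0:ℝ) < t := ht
    have hz0 : (0:ℝ) < t + z := by linarith
    have hu : (0:ℝ) < t + g := by linarith
    exact inv_nonneg.2 (mul_nonneg hu.le (mul_nonneg hz0.le (Real.sqrt_nonneg _)))
  have hφnonneg : ∀ t ∈ Ioi (0:ℝ), 0 ≤ φ t := by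
    intro t ht
    have ht0 : (0:ℝ) < t := ht
    have hz0 : (0:ℝ) < t + z := by linarith
    rw [hφeq t ht]
    exact mul_nonneg (inv_nonneg.2 (Real.sqrt_nonneg _))
      (inv_nonneg.2 (mul_nonneg hz0.le (Real.sqrt_nonneg _)))
  have hφψ : ∀ t ∈ Ioi (0:ℝ), φ t ≤ ψ t := by
    intro t ht
    have ht0 : (0:ℝ) < t := ht
    have hz0 : (0:ℝ) < t + z := by linarith
    have hu : (0:ℝ) < t + g := by linarith
    have hP : (0:ℝ) < (t+x)*(t+y) := by nlinarith
    have hM : (0:ℝ) < (t+z) * Real.sqrt (t+z) := mul_pos hz0 (Real.sqrt_pos.2 hz0)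
    have hug : t + g ≤ Real.sqrt ((t+x)*(t+y)) :=
      (Real.le_sqrt hu.le hP.le).2 (by nlinarith)
    have hsplit : ((t+g) * ((t+z) * Real.sqrt (t+z)))⁻¹
        = (t+g)⁻¹ * ((t+z) * Real.sqrt (t+z))⁻¹ := mul_inv _ _
    rw [hφeq t ht, hψdef]
    simp only
    rw [hsplit]
    exact mul_le_mul_of_nonneg_right (inv_anti₀ hu hug) (inv_nonneg.2 hM.le)
  have hψbound : ∀ t ∈ Ioi (0:ℝ), ψ t ≤ g⁻¹ * ((t+z) * Real.sqrt (t+z))⁻¹ := by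
    intro t ht
    have ht0 : (0:ℝ) < t := ht
    have hz0 : (0:ℝ) < t + z := by linarith
    have hM : (0:ℝ) < (t+z) * Real.sqrt (t+z) := mul_pos hz0 (Real.sqrt_pos.2 hz0)
    have hsplit : ((t+g) * ((t+z) * Real.sqrt (t+z)))⁻¹
        = (t+g)⁻¹ * ((t+z) * Real.sqrt (t+z))⁻¹ := mul_inv _ _
    rw [hψdef]
    simp only
    rw [hsplit]
    exact mul_le_mul_of_nonneg_right (inv_anti₀ hgpos (by linarith))
      (inv_nonneg.2 hM.le)
  -- integrability
  have hintf1g : IntegrableOn (fun t => g⁻¹ * ((t+z) * Real.sqrt (t+z))⁻¹) (Ioi (0:ℝ)) :=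
    hint1.const_mul _
  have hψcont : ContinuousOn ψ (Ioi (0:ℝ)) := by
    apply ContinuousOn.inv₀
    · exact ((continuous_id.add continuous_const).mul ((continuous_id.add continuous_const).mul
        (Real.continuous_sqrt.comp (continuous_id.add continuous_const)))).continuousOn
    · intro t ht
      have ht0 : (0:ℝ) < t := ht
      have hz0 : (0:ℝ) < t + z := by linarith
      have hu : (0:ℝ) < t + g := by linarith
      exact (mul_pos hu (mul_pos hz0 (Real.sqrt_pos.2 hz0))).ne'
  have hφcont : ContinuousOn φ (Ioi (0:ℝ)) := by
    apply ContinuousOn.mul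
    · apply ContinuousOn.rpow_const
      · exact ((continuous_id.add continuous_const).mul
          (continuous_id.add continuous_const)).continuousOn
      · intro t ht
        have ht0 : (0:ℝ) < t := ht
        exact Or.inl (by nlinarith)
    · apply ContinuousOn.rpow_const (continuous_id.add continuous_const).continuousOn
      intro t ht
      have ht0 : (0:ℝ) < t := ht
      exact Or.inl (show (0:ℝ) < t + z by linarith).ne'
  have hintψ : IntegrableOn ψ (Ioi (0:ℝ)) := by
    refine Integrable.mono' hintf1g (hψcont.aestronglyMeasurable measurableSet_Ioi) ?_
    filter_upwards [ae_restrict_mem measurableSet_Ioi] with t ht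
    rw [Real.norm_eq_abs, abs_of_nonneg (hψnonneg t ht)]
    exact hψbound t ht
  have hintφ : IntegrableOn φ (Ioi (0:ℝ)) := by
    refine Integrable.mono' hintf1g (hφcont.aestronglyMeasurable measurableSet_Ioi) ?_
    filter_upwards [ae_restrict_mem measurableSet_Ioi] with t ht
    rw [Real.norm_eq_abs, abs_of_nonneg (hφnonneg t ht)]
    exact le_trans (hφψ t ht) (hψbound t ht)
  -- pointwise strict inequality for the lower bound (L)
  have hPL : ∀ t ∈ Ioi (0:ℝ),
      g⁻¹ * ((t+z) * Real.sqrt (t+z))⁻¹ - φ t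
        < a/g^2 * (Real.sqrt t * (t+g))⁻¹ := by
    intro t ht
    have ht0 : (0:ℝ) < t := ht
    have hz0 : (0:ℝ) < t + z := by linarith
    have hu : (0:ℝ) < t + g := by linarith
    have hP : (0:ℝ) < (t+x)*(t+y) := by nlinarith
    have hsP : (0:ℝ) < Real.sqrt ((t+x)*(t+y)) := Real.sqrt_pos.2 hP
    have hst : (0:ℝ) < Real.sqrt t := Real.sqrt_pos.2 ht0
    have hM : (0:ℝ) < (t+z) * Real.sqrt (t+z) := mul_pos hz0 (Real.sqrt_pos.2 hz0)
    have hPval : (t+x)*(t+y) = (t+g)^2 + 2*(a-g)*t := by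
      linear_combination t*h2a - hg2
    set B := (a-g)*t/(t+g) with hBdef
    have hB0 : (0:ℝ) ≤ B := div_nonneg (mul_nonneg (by linarith) ht0.le) hu.le
    have huB : (t+g)*B = (a-g)*t := by rw [hBdef]; field_simp
    have hsPub : Real.sqrt ((t+x)*(t+y)) ≤ (t+g) + B := by
      rw [show (t+g) + B = Real.sqrt (((t+g)+B)^2) from
        (Real.sqrt_sq (by linarith)).symm]
      apply Real.sqrt_le_sqrt
      nlinarith [sq_nonneg B]
    have hsPlb : g < Real.sqrt ((t+x)*(t+y)) := by
      calc g = Real.sqrt (g^2) := (Real.sqrt_sq hgpos.le).symm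
      _ < Real.sqrt ((t+x)*(t+y)) := Real.sqrt_lt_sqrt (sq_nonneg g) (by nlinarith)
    have pos1 : 0 < g⁻¹ - (Real.sqrt ((t+x)*(t+y)))⁻¹ := by
      have := inv_strictAnti₀ hgpos hsPlb
      linarith
    have key2 : ((t+z) * Real.sqrt (t+z))⁻¹ < (t * Real.sqrt t)⁻¹ := by
      apply inv_strictAnti₀ (mul_pos ht0 hst)
      have h1 : Real.sqrt t ≤ Real.sqrt (t+z) := Real.sqrt_le_sqrt (by linarith)
      nlinarith [Real.sqrt_pos.2 hz0]
    have key1 : g⁻¹ - (Real.sqrt ((t+x)*(t+y)))⁻¹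
        ≤ t/(g*(t+g)) + (a-g)*t/(t+g)^3 := by
      have h1 : ((t+g) + B)⁻¹ ≤ (Real.sqrt ((t+x)*(t+y)))⁻¹ :=
        inv_anti₀ hsP hsPub
      have huB0 : (0:ℝ) < (t+g) + B := by linarith
      have e1 : ((t+g)+B)⁻¹ - ((t+g)⁻¹ - B/(t+g)^2) = B^2/((t+g)^2*((t+g)+B)) := by
        field_simp
        ring
      have h2 : (t+g)⁻¹ - B/(t+g)^2 ≤ ((t+g)+B)⁻¹ := by
        have hnn : (0:ℝ) ≤ B^2/((t+g)^2*((t+g)+B)) :=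
          div_nonneg (sq_nonneg B) (mul_nonneg (sq_nonneg _) huB0.le)
        linarith
      have e2 : g⁻¹ - (t+g)⁻¹ = t/(g*(t+g)) := by
        field_simp
        ring
      have e3 : B/(t+g)^2 = (a-g)*t/(t+g)^3 := by
        rw [hBdef, div_div]
        congr 1
        ring
      linarith
    have c1 : (g⁻¹ - (Real.sqrt ((t+x)*(t+y)))⁻¹) * ((t+z) * Real.sqrt (t+z))⁻¹
        < (g⁻¹ - (Real.sqrt ((t+x)*(t+y)))⁻¹) * (t * Real.sqrt t)⁻¹ :=
      mul_lt_mul_of_pos_left key2 pos1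
    have c2 : (g⁻¹ - (Real.sqrt ((t+x)*(t+y)))⁻¹) * (t * Real.sqrt t)⁻¹
        ≤ (t/(g*(t+g)) + (a-g)*t/(t+g)^3) * (t * Real.sqrt t)⁻¹ :=
      mul_le_mul_of_nonneg_right key1 (inv_nonneg.2 (mul_nonneg ht0.le hst.le))
    have m1 : (a-g)*t/(t+g)^3 ≤ (a-g)*t/(g^2*(t+g)) := by
      rw [div_le_div_iff₀ (pow_pos hu 3) (mul_pos (pow_pos hgpos 2) hu)]
      have hkey : (0:ℝ) ≤ (a-g)*t*((t+g)^3 - g^2*(t+g)) := by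
        apply mul_nonneg (mul_nonneg (by linarith) ht0.le)
        nlinarith [mul_nonneg (mul_nonneg hu.le ht0.le)
          (by linarith : (0:ℝ) ≤ t + 2*g)]
      nlinarith [hkey]
    have m2 : (t/(g*(t+g)) + (a-g)*t/(t+g)^3) * (t * Real.sqrt t)⁻¹
        ≤ (t/(g*(t+g)) + (a-g)*t/(g^2*(t+g))) * (t * Real.sqrt t)⁻¹ :=
      mul_le_mul_of_nonneg_right (by linarith)
        (inv_nonneg.2 (mul_nonneg ht0.le hst.le))
    have e5 : (t/(g*(t+g)) + (a-g)*t/(g^2*(t+g))) * (t * Real.sqrt t)⁻¹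
        = a/g^2 * (Real.sqrt t * (t+g))⁻¹ := by
      field_simp
      ring
    have e0 : g⁻¹ * ((t+z) * Real.sqrt (t+z))⁻¹ - φ t
        = (g⁻¹ - (Real.sqrt ((t+x)*(t+y)))⁻¹) * ((t+z) * Real.sqrt (t+z))⁻¹ := by
      rw [hφeq t ht]
      ring
    linarith
  -- pointwise strict inequality for the upper bound (U)
  have hPU : ∀ t ∈ Ioi (0:ℝ),
      g⁻¹ * (Real.sqrt t * (t+g))⁻¹ - (g⁻¹ * ((t+z) * Real.sqrt (t+z))⁻¹ - ψ t)
        < g⁻¹ * g⁻¹ * ((Real.sqrt t)⁻¹ - t * ((t+z) * Real.sqrt (t+z))⁻¹) := by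
    intro t ht
    have ht0 : (0:ℝ) < t := ht
    have hz0 : (0:ℝ) < t + z := by linarith
    have hu : (0:ℝ) < t + g := by linarith
    have hst : (0:ℝ) < Real.sqrt t := Real.sqrt_pos.2 ht0
    have hsz : (0:ℝ) < Real.sqrt (t+z) := Real.sqrt_pos.2 hz0
    have hM : (0:ℝ) < (t+z) * Real.sqrt (t+z) := mul_pos hz0 hsz
    have hf3pos : (0:ℝ) < (Real.sqrt t)⁻¹ - t * ((t+z) * Real.sqrt (t+z))⁻¹ := by
      have hlt : t * Real.sqrt t < (t+z) * Real.sqrt (t+z) := by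
        have h1 : Real.sqrt t ≤ Real.sqrt (t+z) := Real.sqrt_le_sqrt (by linarith)
        nlinarith
      have h2 : t * ((t+z) * Real.sqrt (t+z))⁻¹ < t * (t * Real.sqrt t)⁻¹ :=
        mul_lt_mul_of_pos_left (inv_strictAnti₀ (mul_pos ht0 hst) hlt) ht0
      have h3 : t * (t * Real.sqrt t)⁻¹ = (Real.sqrt t)⁻¹ := by
        field_simp
      linarith
    have e1 : g⁻¹ * (Real.sqrt t * (t+g))⁻¹ - (g⁻¹ * ((t+z) * Real.sqrt (t+z))⁻¹ - ψ t)
        = (g*(t+g))⁻¹ * ((Real.sqrt t)⁻¹ - t * ((t+z) * Real.sqrt (t+z))⁻¹) := by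
      rw [hψdef]
      simp only
      field_simp
      ring
    rw [e1]
    apply mul_lt_mul_of_pos_right _ hf3pos
    rw [← mul_inv]
    apply inv_strictAnti₀ (by positivity)
    nlinarith
  -- integral comparisons
  have hintsub1 : IntegrableOn
      (fun t => g⁻¹ * ((t+z) * Real.sqrt (t+z))⁻¹ - φ t) (Ioi (0:ℝ)) :=
    hintf1g.sub hintφ
  have hintsub2 : IntegrableOn
      (fun t => g⁻¹ * ((t+z) * Real.sqrt (t+z))⁻¹ - ψ t) (Ioi (0:ℝ)) := hintf1g.sub hintψ
  have hL1 : (∫ t in Ioi (0:ℝ), (g⁻¹ * ((t+z) * Real.sqrt (t+z))⁻¹ - φ t))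
      < ∫ t in Ioi (0:ℝ), a/g^2 * (Real.sqrt t * (t+g))⁻¹ :=
    RDaux.integral_strict_lt hintsub1 (hint2.const_mul _) hPL
  have hU1 : (∫ t in Ioi (0:ℝ), (g⁻¹ * (Real.sqrt t * (t+g))⁻¹
        - (g⁻¹ * ((t+z) * Real.sqrt (t+z))⁻¹ - ψ t)))
      < ∫ t in Ioi (0:ℝ),
          g⁻¹ * g⁻¹ * ((Real.sqrt t)⁻¹ - t * ((t+z) * Real.sqrt (t+z))⁻¹) :=
    RDaux.integral_strict_lt ((hint2.const_mul _).sub hintsub2) (hint3.const_mul _) hPU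
  have hU2 : (∫ t in Ioi (0:ℝ), (g⁻¹ * ((t+z) * Real.sqrt (t+z))⁻¹ - ψ t))
      ≤ ∫ t in Ioi (0:ℝ), (g⁻¹ * ((t+z) * Real.sqrt (t+z))⁻¹ - φ t) :=
    setIntegral_mono_on hintsub2 hintsub1 measurableSet_Ioi
      (fun t ht => sub_le_sub_left (hφψ t ht) _)
  rw [integral_sub hintf1g hintφ, integral_const_mul, integral_const_mul,
    hval1, hval2] at hL1
  rw [integral_sub (hint2.const_mul _) hintsub2, integral_const_mul, integral_const_mul,
    hval2, hval3] at hU1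
  rw [integral_sub hintf1g hintφ, integral_const_mul, hval1] at hU2
  have hsz : (0:ℝ) < Real.sqrt z := Real.sqrt_pos.2 hz
  have hsg : (0:ℝ) < Real.sqrt g := Real.sqrt_pos.2 hgpos
  have hsgsq : Real.sqrt g ^ 2 = g := Real.sq_sqrt hgpos.le
  have hgne : g ≠ 0 := hgpos.ne'
  have hszne : Real.sqrt z ≠ 0 := hsz.ne'
  have hsgne : Real.sqrt g ≠ 0 := hsg.ne'
  have hπ : (0:ℝ) < π := Real.pi_pos
  have hπne : π ≠ 0 := Real.pi_ne_zero
  -- the two key bounds on RD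
  have hL' : 3/(g*Real.sqrt z) - 3*π*a/(2*g^2*Real.sqrt g) < RD x y z := by
    rw [hRD]
    have e : (3:ℝ)/2 * (g⁻¹*(2/Real.sqrt z) - a/g^2*(π/Real.sqrt g))
        = 3/(g*Real.sqrt z) - 3*π*a/(2*g^2*Real.sqrt g) := by ring
    linarith [hL1, e]
  have hU' : RD x y z < 3/(g*Real.sqrt z) - 3*π/(2*g*Real.sqrt g)
      + 6*Real.sqrt z/g^2 := by
    rw [hRD]
    have e : (3:ℝ)/2 * (g⁻¹*(2/Real.sqrt z) - g⁻¹*(π/Real.sqrt g)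
          + g⁻¹*g⁻¹*(4*Real.sqrt z))
        = 3/(g*Real.sqrt z) - 3*π/(2*g*Real.sqrt g) + 6*Real.sqrt z/g^2 := by ring
    linarith [hU1, hU2, e]
  have hNeq : Real.sqrt (x*y*z) = g * Real.sqrt z := Real.sqrt_mul hxy.le z
  have hSeq : Real.sqrt (z/g) = Real.sqrt z / Real.sqrt g := Real.sqrt_div hz.le g
  have h2sgpos : (0:ℝ) < 2*Real.sqrt g/(π*Real.sqrt z) :=
    div_pos (by linarith) (mul_pos hπ hsz)
  refine ⟨(1 - g * Real.sqrt z * RD x y z / 3) * (2*Real.sqrt g/(π*Real.sqrt z)),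
    ?_, ?_, ?_⟩
  · rw [hSeq]
    have h1 : π*Real.sqrt z/(2*Real.sqrt g) - 2*(Real.sqrt z)^2/g
        < 1 - g*Real.sqrt z*(RD x y z)/3 := by
      have e : g*Real.sqrt z/3 * (3/(g*Real.sqrt z) - 3*π/(2*g*Real.sqrt g)
            + 6*Real.sqrt z/g^2)
          = 1 - π*Real.sqrt z/(2*Real.sqrt g) + 2*(Real.sqrt z)^2/g := by
        field_simp
        ring
      have h2 := mul_lt_mul_of_pos_left hU' (show (0:ℝ) < g*Real.sqrt z/3 by positivity)
      linarith [h2, e]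
    have h3 := mul_lt_mul_of_pos_right h1 h2sgpos
    have e2 : (π*Real.sqrt z/(2*Real.sqrt g) - 2*(Real.sqrt z)^2/g)
        * (2*Real.sqrt g/(π*Real.sqrt z))
        = 1 - 4/π*(Real.sqrt z/Real.sqrt g) := by
      field_simp
      linear_combination (-4*Real.sqrt z) * hsgsq
    linarith [h3, e2]
  · have h1 : 1 - g*Real.sqrt z*(RD x y z)/3 < π*a*Real.sqrt z/(2*g*Real.sqrt g) := by
      have e : g*Real.sqrt z/3 * (3/(g*Real.sqrt z) - 3*π*a/(2*g^2*Real.sqrt g))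
          = 1 - π*a*Real.sqrt z/(2*g*Real.sqrt g) := by
        field_simp
      have h2 := mul_lt_mul_of_pos_left hL' (show (0:ℝ) < g*Real.sqrt z/3 by positivity)
      linarith [h2, e]
    have h3 := mul_lt_mul_of_pos_right h1 h2sgpos
    have e2 : (π*a*Real.sqrt z/(2*g*Real.sqrt g)) * (2*Real.sqrt g/(π*Real.sqrt z))
        = a/g := by
      field_simp
    linarith [h3, e2]
  · rw [hNeq, hSeq]
    field_simp
    ring
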